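/- arXiv:2402.14761 — 3 statements merged into one kernel-verified Lean document; each statement's English description precedes it below -/
import Mathlib

section
/- Let b ≥ 2 and α a digit in base b. Let A(l) be the number of length-l strings over {0,…,b-1} avoiding αα. Then Σ_{l ≥ 0} A(l)·b^{-l} converges and equals b(b+1). -/
/-- Number of strings of length `l` over `Fin b` avoiding the contiguous pattern `αα`. -/
noncomputable def avoidCount (b : ℕ) (α : Fin b) (l : ℕ) : ℕ :=
  Nat.card {s : List (Fin b) // s.length = l ∧ ¬ [α, α] <:+: s}

namespace AvoidAux

variable {b : ℕ} (α : Fin b)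

abbrev S (l : ℕ) := {s : List (Fin b) // s.length = l ∧ ¬ [α, α] <:+: s}

abbrev T (l : ℕ) :=
  {s : List (Fin b) // s.length = l ∧ ¬ [α, α] <:+: s ∧ s.head? ≠ some α}

instance (l : ℕ) : Finite (S α l) := by
  have h := (List.finite_length_eq (Fin b) l).to_subtype
  exact Finite.of_injective
    (fun s : S α l => (⟨s.1, s.2.1⟩ : {s : List (Fin b) | s.length = l}))
    (by intro x y hxy; simp only [Subtype.mk.injEq] at hxy; exact Subtype.ext hxy)

instance (l : ℕ) : Finite (T α l) := by
  have h := (List.finite_length_eq (Fin b) l).to_subtype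
  exact Finite.of_injective
    (fun s : T α l => (⟨s.1, s.2.1⟩ : {s : List (Fin b) | s.length = l}))
    (by intro x y hxy; simp only [Subtype.mk.injEq] at hxy; exact Subtype.ext hxy)

lemma infix_pair_cons (a : Fin b) (s : List (Fin b)) :
    [α, α] <:+: (a :: s) ↔ (a = α ∧ s.head? = some α) ∨ [α, α] <:+: s := by
  rw [List.infix_cons_iff, List.cons_prefix_cons]
  constructor
  · rintro (⟨ha, hp⟩ | h)
    · left
      refine ⟨ha.symm, ?_⟩
      cases s with
      | nil => exact absurd hp (by simp)
      | cons c t =>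
        obtain ⟨hc, -⟩ := List.cons_prefix_cons.mp hp
        simp [hc.symm]
    · right; exact h
  · rintro (⟨ha, hh⟩ | h)
    · left
      refine ⟨ha.symm, ?_⟩
      cases s with
      | nil => simp at hh
      | cons c t =>
        have hc : c = α := by simpa using hh
        exact List.cons_prefix_cons.mpr ⟨hc.symm, List.nil_prefix⟩
    · right; exact h

noncomputable def e1 (l : ℕ) : ({a : Fin b // a ≠ α} × S α l) ⊕ T α l ≃ S α (l + 1) :=
  Equiv.ofBijective
    (fun x => match x with
      | .inl (a, t) => ⟨a.1 :: t.1, by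
          refine ⟨by simp [t.2.1], ?_⟩
          rw [infix_pair_cons]
          rintro (⟨h, -⟩ | h)
          exacts [a.2 h, t.2.2 h]⟩
      | .inr t => ⟨α :: t.1, by
          refine ⟨by simp [t.2.1], ?_⟩
          rw [infix_pair_cons]
          rintro (⟨-, h⟩ | h)
          exacts [t.2.2.2 h, t.2.2.1 h]⟩)
    (by
      constructor
      · rintro (⟨a, t⟩ | t) (⟨a', t'⟩ | t') h <;>
          simp only [Subtype.mk.injEq, List.cons.injEq] at h
        · exact congrArg Sum.inl (Prod.ext (Subtype.ext h.1) (Subtype.ext h.2))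
        · exact absurd h.1 a.2
        · exact absurd h.1.symm a'.2
        · exact congrArg Sum.inr (Subtype.ext h.2)
      · rintro ⟨s, hlen, hinf⟩
        cases s with
        | nil => simp at hlen
        | cons a t =>
          rw [infix_pair_cons] at hinf
          push_neg at hinf
          by_cases ha : a = α
          · subst ha
            exact ⟨.inr ⟨t, by simpa using hlen, hinf.2, hinf.1 rfl⟩, rfl⟩
          · exact ⟨.inl (⟨a, ha⟩, ⟨t, by simpa using hlen, hinf.2⟩), rfl⟩)

noncomputable def e2 (l : ℕ) : ({a : Fin b // a ≠ α} × S α l) ≃ T α (l + 1) :=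
  Equiv.ofBijective
    (fun x => ⟨x.1.1 :: x.2.1, by
        refine ⟨by simp [x.2.2.1], ?_, by simpa using x.1.2⟩
        rw [infix_pair_cons]
        rintro (⟨h, -⟩ | h)
        exacts [x.1.2 h, x.2.2.2 h]⟩)
    (by
      constructor
      · rintro ⟨a, t⟩ ⟨a', t'⟩ h
        simp only [Subtype.mk.injEq, List.cons.injEq] at h
        exact Prod.ext (Subtype.ext h.1) (Subtype.ext h.2)
      · rintro ⟨s, hlen, hinf, hhead⟩
        cases s with
        | nil => simp at hlen
        | cons a t =>
          rw [infix_pair_cons] at hinf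
          push_neg at hinf
          have ha : a ≠ α := by simpa using hhead
          exact ⟨(⟨a, ha⟩, ⟨t, by simpa using hlen, hinf.2⟩), rfl⟩)

lemma card_fin_ne : Nat.card {a : Fin b // a ≠ α} = b - 1 := by
  rw [Nat.card_eq_fintype_card]
  have : Fintype.card {a : Fin b // ¬ a = α}
      = Fintype.card (Fin b) - Fintype.card {a : Fin b // a = α} :=
    Fintype.card_subtype_compl _
  simpa [Fintype.card_subtype_eq] using this

lemma cardS_succ (l : ℕ) :
    Nat.card (S α (l + 1)) = (b - 1) * Nat.card (S α l) + Nat.card (T α l) := by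
  rw [← Nat.card_congr (e1 α l), Nat.card_sum, Nat.card_prod, card_fin_ne]

lemma cardT_succ (l : ℕ) :
    Nat.card (T α (l + 1)) = (b - 1) * Nat.card (S α l) := by
  rw [← Nat.card_congr (e2 α l), Nat.card_prod, card_fin_ne]

lemma avoid_zero : avoidCount b α 0 = 1 := by
  haveI : Unique (S α 0) :=
    { default := ⟨[], by simp⟩
      uniq := fun s => Subtype.ext (by simpa using List.length_eq_zero_iff.mp s.2.1) }
  exact Nat.card_unique

lemma avoid_one : avoidCount b α 1 = b := by
  have e : Fin b ≃ S α 1 :=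
    Equiv.ofBijective (fun a => ⟨[a], by
        refine ⟨rfl, fun h => ?_⟩
        have := h.length_le
        simp at this⟩)
      ⟨fun x y h => by
        simp only [Subtype.mk.injEq, List.cons.injEq] at h
        exact h.1,
       by
        rintro ⟨s, hlen, -⟩
        cases s with
        | nil => simp at hlen
        | cons a t =>
          have : t = [] := by simpa using hlen
          subst this
          exact ⟨a, rfl⟩⟩
  show Nat.card (S α 1) = b
  rw [← Nat.card_congr e, Nat.card_eq_fintype_card, Fintype.card_fin]

lemma avoid_rec (l : ℕ) :
    avoidCount b α (l + 2) = (b - 1) * (avoidCount b α (l + 1) + avoidCount b α l) := by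
  show Nat.card (S α (l + 2)) = (b - 1) * (Nat.card (S α (l + 1)) + Nat.card (S α l))
  rw [cardS_succ, cardT_succ, Nat.mul_add]

end AvoidAux

open Filter Topology

lemma sum_helper (b : ℕ) (hb : 2 ≤ b) (A : ℕ → ℕ) (h0 : A 0 = 1) (h1 : A 1 = b)
    (hrec : ∀ l, A (l + 2) = (b - 1) * (A (l + 1) + A l)) :
    HasSum (fun l : ℕ => (A l : ℝ) / (b : ℝ) ^ l) ((b : ℝ) * ((b : ℝ) + 1)) := by
  have hb' : (2 : ℝ) ≤ (b : ℝ) := by exact_mod_cast hb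
  have hbpos : (0 : ℝ) < b := by linarith
  have hbne : (b : ℝ) ≠ 0 := ne_of_gt hbpos
  set f : ℕ → ℝ := fun l => (A l : ℝ) / (b : ℝ) ^ l with hf
  set c : ℝ := ((b : ℝ) - 1) / b with hc
  set d : ℝ := ((b : ℝ) - 1) / b ^ 2 with hd
  have hc0 : 0 ≤ c := by rw [hc]; apply div_nonneg <;> [linarith; linarith]
  have hd0 : 0 ≤ d := by rw [hd]; apply div_nonneg <;> [linarith; positivity]
  have hfnn : ∀ l, 0 ≤ f l := fun l => by
    rw [hf]; positivity
  have f0 : f 0 = 1 := by simp [hf, h0]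
  have f1 : f 1 = 1 := by
    rw [hf]; simp only [h1, pow_one]; field_simp
  have frec : ∀ l, f (l + 2) = c * f (l + 1) + d * f l := by
    intro l
    have hcast : ((A (l + 2) : ℝ)) = ((b : ℝ) - 1) * ((A (l + 1) : ℝ) + (A l : ℝ)) := by
      rw [hrec]
      push_cast [Nat.cast_sub (by omega : 1 ≤ b)]
      ring
    simp only [hf]
    rw [hcast, hc, hd]
    field_simp
    ring
  set s : ℕ → ℝ := fun N => ∑ l ∈ Finset.range N, f l with hs
  have srec : ∀ N, s (N + 2) = c * s (N + 1) + d * s N + (2 - c) := by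
    intro N
    have e1 : s (N + 2) = ∑ i ∈ Finset.range (N + 1), f (i + 1) + f 0 :=
      Finset.sum_range_succ' f (N + 1)
    have e2 : ∑ i ∈ Finset.range (N + 1), f (i + 1)
        = ∑ i ∈ Finset.range N, f (i + 2) + f 1 :=
      Finset.sum_range_succ' (fun i => f (i + 1)) N
    have e3 : s (N + 1) = ∑ i ∈ Finset.range N, f (i + 1) + 1 := by
      rw [← f0]; exact Finset.sum_range_succ' f N
    have e4 : ∑ i ∈ Finset.range N, f (i + 2)
        = c * (∑ i ∈ Finset.range N, f (i + 1)) + d * s N := by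
      rw [Finset.mul_sum, Finset.mul_sum, ← Finset.sum_add_distrib]
      exact Finset.sum_congr rfl fun i _ => frec i
    rw [e1, e2, e4, f0, f1, e3]
    ring
  have key : c * ((b : ℝ) * (b + 1)) + d * ((b : ℝ) * (b + 1)) + (2 - c)
      = (b : ℝ) * (b + 1) := by
    rw [hc, hd]; field_simp; ring
  have hbound : ∀ N, s N ≤ (b : ℝ) * (b + 1) := by
    intro N
    induction N using Nat.strong_induction_on with
    | _ N ih =>
      match N, ih with
      | 0, _ => rw [hs]; simp; nlinarith
      | 1, _ => rw [hs]; simp [f0]; nlinarith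
      | (M + 2), ih =>
        have hm1 := ih (M + 1) (by omega)
        have hm2 := ih M (by omega)
        rw [srec M]
        have m1 : c * s (M + 1) ≤ c * ((b : ℝ) * (b + 1)) :=
          mul_le_mul_of_nonneg_left hm1 hc0
        have m2 : d * s M ≤ d * ((b : ℝ) * (b + 1)) :=
          mul_le_mul_of_nonneg_left hm2 hd0
        linarith
  have hmono : Monotone s := monotone_nat_of_le_succ fun n => by
    rw [hs]; simp only [Finset.sum_range_succ]
    exact le_add_of_nonneg_right (hfnn n)
  have hbdd : BddAbove (Set.range s) := ⟨(b : ℝ) * (b + 1), by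
    rintro x ⟨N, rfl⟩; exact hbound N⟩
  have htend : Tendsto s atTop (𝓝 (⨆ N, s N)) := tendsto_atTop_ciSup hmono hbdd
  set L : ℝ := ⨆ N, s N with hL
  have ht1 : Tendsto (fun N => s (N + 1)) atTop (𝓝 L) :=
    htend.comp (tendsto_add_atTop_nat 1)
  have ht2 : Tendsto (fun N => s (N + 2)) atTop (𝓝 L) :=
    htend.comp (tendsto_add_atTop_nat 2)
  have hcomb : Tendsto (fun N => c * s (N + 1) + d * s N + (2 - c)) atTop
      (𝓝 (c * L + d * L + (2 - c))) :=
    ((ht1.const_mul c).add (htend.const_mul d)).add_const (2 - c)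
  have heq : (fun N => c * s (N + 1) + d * s N + (2 - c)) = fun N => s (N + 2) :=
    funext fun N => (srec N).symm
  have hfix : c * L + d * L + (2 - c) = L :=
    tendsto_nhds_unique (heq ▸ hcomb) ht2
  have hLval : L = (b : ℝ) * (b + 1) := by
    rw [hc, hd] at hfix
    field_simp at hfix
    have h2 : L * (b : ℝ) ^ 2 = ((b : ℝ) * ((b : ℝ) + 1)) * (b : ℝ) ^ 2 := by
      linear_combination (-(b:ℝ)^2) * hfix
    exact mul_right_cancel₀ (pow_ne_zero 2 hbne) h2
  rw [hasSum_iff_tendsto_nat_of_nonneg hfnn]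
  rw [← hLval]
  exact htend

theorem stmt_5 (b : ℕ) (hb : 2 ≤ b) (α : Fin b) :
    HasSum (fun l : ℕ => (avoidCount b α l : ℝ) / (b : ℝ) ^ l) ((b : ℝ) * (b + 1)) := by
  exact sum_helper b hb (avoidCount b α) (AvoidAux.avoid_zero α) (AvoidAux.avoid_one α)
    (AvoidAux.avoid_rec α)
end

section
/- Let b ≥ 2 and α a digit. Define U(n) = Σ 1/m over integers m whose leading l(n) digits form n and whose trailing digit string contains no αα and does not start with α. Then for every positive integer n: U(n) = 1/n + Σ_{d ≠ α, 0 ≤ d < b} ( U(n·b + d) + U(n·b² + d·b + α) ). -/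
/-- The base-`b` digits of `n`, leading digit first. -/
def digitsBE (b n : ℕ) : List ℕ := (Nat.digits b n).reverse

/-- `m`'s leading digits form `n` and the trailing digit string has no contiguous
occurrence of `αα` and does not start with `α`. -/
def KeptU (b α n m : ℕ) : Prop :=
  ∃ t : List ℕ, digitsBE b m = digitsBE b n ++ t ∧ ¬ [α, α] <:+: t ∧ t.head? ≠ some α

noncomputable def U (b α n : ℕ) : ℝ :=
  ∑' m : {m : ℕ // KeptU b α n m}, (1 : ℝ) / (m : ℕ)

open scoped ENNReal

namespace Stmt15

noncomputable def gE : ℕ → ℝ≥0∞ := fun m => (m : ℝ≥0∞)⁻¹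

def SU (b α n : ℕ) : Set ℕ := {m | KeptU b α n m}

def TSU (b α n K : ℕ) : Set ℕ :=
  {m | m ∈ SU b α n ∧ (Nat.digits b m).length ≤ (Nat.digits b n).length + K}

noncomputable def VE (b α n : ℕ) : ℝ≥0∞ := ∑' m : ℕ, Set.indicator (SU b α n) gE m

noncomputable def VEK (b α n K : ℕ) : ℝ≥0∞ := ∑' m : ℕ, Set.indicator (TSU b α n K) gE m

lemma digits_child {b : ℕ} (hb : 2 ≤ b) {d : ℕ} (hd : d < b) {n : ℕ} (hn : 0 < n) :
    Nat.digits b (n * b + d) = d :: Nat.digits b n := by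
  have h1 : 1 < b := hb
  have hpos : 0 < n * b + d := by
    have : 1 * 1 ≤ n * b := Nat.mul_le_mul hn (by omega)
    omega
  rw [Nat.digits_def' h1 hpos]
  have hmod : (n * b + d) % b = d := by
    rw [Nat.add_comm, Nat.add_mul_mod_self_right, Nat.mod_eq_of_lt hd]
  have hdiv : (n * b + d) / b = n := by
    rw [Nat.add_comm, Nat.add_mul_div_right _ _ (by omega : 0 < b), Nat.div_eq_of_lt hd]
    omega
  rw [hmod, hdiv]

lemma digitsBE_child {b : ℕ} (hb : 2 ≤ b) {d : ℕ} (hd : d < b) {n : ℕ} (hn : 0 < n) :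
    digitsBE b (n * b + d) = digitsBE b n ++ [d] := by
  unfold digitsBE
  rw [digits_child hb hd hn]
  simp

lemma digits_child2 {b : ℕ} (hb : 2 ≤ b) {d e : ℕ} (hd : d < b) (he : e < b) {n : ℕ}
    (hn : 0 < n) : Nat.digits b (n * b ^ 2 + d * b + e) = e :: d :: Nat.digits b n := by
  have h2 : n * b ^ 2 + d * b + e = (n * b + d) * b + e := by ring
  have hpos : 0 < n * b + d := by
    have : 1 * 1 ≤ n * b := Nat.mul_le_mul hn (by omega)
    omega
  rw [h2, digits_child hb he hpos, digits_child hb hd hn]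

lemma digitsBE_child2 {b : ℕ} (hb : 2 ≤ b) {d e : ℕ} (hd : d < b) (he : e < b) {n : ℕ}
    (hn : 0 < n) : digitsBE b (n * b ^ 2 + d * b + e) = digitsBE b n ++ [d, e] := by
  unfold digitsBE
  rw [digits_child2 hb hd he hn]
  simp

lemma digitsBE_inj {b m n : ℕ} (h : digitsBE b m = digitsBE b n) : m = n := by
  have hd : Nat.digits b m = Nat.digits b n := by
    have := congrArg List.reverse h
    simpa [digitsBE] using this
  rw [← Nat.ofDigits_digits b m, hd, Nat.ofDigits_digits]

lemma len_eq {b m n : ℕ} {t : List ℕ} (h : digitsBE b m = digitsBE b n ++ t) :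
    (Nat.digits b m).length = (Nat.digits b n).length + t.length := by
  have := congrArg List.length h
  simpa [digitsBE] using this

lemma digit_lt {b m n : ℕ} (hb : 2 ≤ b) {t : List ℕ} (h : digitsBE b m = digitsBE b n ++ t)
    {x : ℕ} (hx : x ∈ t) : x < b := by
  have hm : x ∈ digitsBE b m := by rw [h]; exact List.mem_append_right _ hx
  exact Nat.digits_lt_base hb (by simpa [digitsBE] using hm)

lemma n_mem_SU {b α n : ℕ} : n ∈ SU b α n :=
  ⟨[], by simp, by simp, by simp⟩

lemma noaa_cons {α d : ℕ} {t : List ℕ} (hd : d ≠ α) (ht : ¬ [α, α] <:+: t) :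
    ¬ [α, α] <:+: d :: t := by
  rw [List.infix_cons_iff]
  rintro (hpre | hinf)
  · rw [List.cons_prefix_cons] at hpre
    exact hd hpre.1.symm
  · exact ht hinf

lemma head_of_prefix_aa {α : ℕ} {t : List ℕ} (h : [α, α] <+: α :: t) : t.head? = some α := by
  rw [List.cons_prefix_cons] at h
  obtain ⟨-, h⟩ := h
  cases t with
  | nil => simpa using h
  | cons c t' =>
    rw [List.cons_prefix_cons] at h
    simp [h.1]

lemma noaa_cons2 {α d : ℕ} {t : List ℕ} (hd : d ≠ α) (ht : ¬ [α, α] <:+: t)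
    (hh : t.head? ≠ some α) : ¬ [α, α] <:+: d :: α :: t := by
  refine noaa_cons hd ?_
  rw [List.infix_cons_iff]
  rintro (hpre | hinf)
  · exact hh (head_of_prefix_aa hpre)
  · exact ht hinf

lemma sub1 {b α n : ℕ} (hb : 2 ≤ b) (hn : 0 < n) {d : ℕ} (hd : d < b) (hda : d ≠ α) :
    SU b α (n * b + d) ⊆ SU b α n := by
  rintro m ⟨t, ht, hinf, hhead⟩
  refine ⟨d :: t, ?_, noaa_cons hda hinf, by simp [hda]⟩
  rw [ht, digitsBE_child hb hd hn]
  simp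

lemma sub2 {b α n : ℕ} (hb : 2 ≤ b) (hα : α < b) (hn : 0 < n) {d : ℕ} (hd : d < b)
    (hda : d ≠ α) : SU b α (n * b ^ 2 + d * b + α) ⊆ SU b α n := by
  rintro m ⟨t, ht, hinf, hhead⟩
  refine ⟨d :: α :: t, ?_, noaa_cons2 hda hinf hhead, by simp [hda]⟩
  rw [ht, digitsBE_child2 hb hd hα hn]
  simp

/-- If `m` is in the one-step child set, its trailing string starts with `d`. -/
lemma char1 {b α n d m : ℕ} (hb : 2 ≤ b) (hd : d < b) (hn : 0 < n) {t : List ℕ}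
    (ht : digitsBE b m = digitsBE b n ++ t) (h : m ∈ SU b α (n * b + d)) :
    ∃ t', t = d :: t' ∧ t'.head? ≠ some α := by
  obtain ⟨t', ht', _, hh⟩ := h
  rw [digitsBE_child hb hd hn, List.append_assoc] at ht'
  refine ⟨t', ?_, hh⟩
  have := List.append_cancel_left (ht.symm.trans ht')
  simpa using this

/-- If `m` is in the two-step child set, its trailing string starts with `d, α`. -/
lemma char2 {b α n d m : ℕ} (hb : 2 ≤ b) (hα : α < b) (hd : d < b) (hn : 0 < n) {t : List ℕ}
    (ht : digitsBE b m = digitsBE b n ++ t) (h : m ∈ SU b α (n * b ^ 2 + d * b + α)) :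
    ∃ t', t = d :: α :: t' := by
  obtain ⟨t', ht', _, _⟩ := h
  rw [digitsBE_child2 hb hd hα hn, List.append_assoc] at ht'
  refine ⟨t', ?_⟩
  have := List.append_cancel_left (ht.symm.trans ht')
  simpa using this

lemma mem1 {b α n d m : ℕ} (hb : 2 ≤ b) (hd : d < b) (hn : 0 < n) {rest : List ℕ}
    (ht : digitsBE b m = digitsBE b n ++ d :: rest) (hinf : ¬ [α, α] <:+: d :: rest)
    (hrh : rest.head? ≠ some α) : m ∈ SU b α (n * b + d) := by
  refine ⟨rest, ?_, fun h => hinf (List.infix_cons h), hrh⟩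
  rw [ht, digitsBE_child hb hd hn]
  simp

lemma mem2 {b α n d m : ℕ} (hb : 2 ≤ b) (hα : α < b) (hd : d < b) (hn : 0 < n) {t2 : List ℕ}
    (ht : digitsBE b m = digitsBE b n ++ d :: α :: t2) (hinf : ¬ [α, α] <:+: d :: α :: t2) :
    m ∈ SU b α (n * b ^ 2 + d * b + α) := by
  refine ⟨t2, ?_, fun h => hinf (List.infix_cons (List.infix_cons h)), ?_⟩
  · rw [ht, digitsBE_child2 hb hd hα hn]
    simp
  · intro h
    obtain ⟨t3, rfl⟩ : ∃ t3, t2 = α :: t3 := by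
      cases t2 with
      | nil => simp at h
      | cons c t3 => exact ⟨t3, by rw [show c = α by simpa using h]⟩
    exact hinf ⟨[d], t3, rfl⟩

/-- Covering: every member of `SU b α n` is `n` or lands in a child set. -/
lemma cover {b α n : ℕ} (hb : 2 ≤ b) (hn : 0 < n) {m : ℕ} (hm : m ∈ SU b α n) :
    m = n ∨ ∃ d ∈ (Finset.range b).erase α,
      m ∈ SU b α (n * b + d) ∨ m ∈ SU b α (n * b ^ 2 + d * b + α) := by
  by_cases hα : α < b
  case neg =>
    -- if α ≥ b, the erase is irrelevant but we still need the cover; handle uniformly below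
    obtain ⟨t, ht, hinf, hhead⟩ := hm
    cases t with
    | nil => exact Or.inl (digitsBE_inj (by simpa using ht))
    | cons d rest =>
      right
      have hd : d < b := digit_lt hb ht (by simp)
      have hda : d ≠ α := by simpa using hhead
      refine ⟨d, by simp [Finset.mem_erase, hda, hd], ?_⟩
      by_cases hrh : rest.head? = some α
      · obtain ⟨t2, rfl⟩ : ∃ t2, rest = α :: t2 := by
          cases rest with
          | nil => simp at hrh
          | cons c t2 => exact ⟨t2, by rw [show c = α by simpa using hrh]⟩
        have : α ∈ digitsBE b m := by rw [ht]; simp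
        have : α < b := Nat.digits_lt_base hb (by simpa [digitsBE] using this)
        omega
      · exact Or.inl (mem1 hb hd hn ht hinf hrh)
  case pos =>
    obtain ⟨t, ht, hinf, hhead⟩ := hm
    cases t with
    | nil => exact Or.inl (digitsBE_inj (by simpa using ht))
    | cons d rest =>
      right
      have hd : d < b := digit_lt hb ht (by simp)
      have hda : d ≠ α := by simpa using hhead
      refine ⟨d, by simp [Finset.mem_erase, hda, hd], ?_⟩
      by_cases hrh : rest.head? = some α
      · obtain ⟨t2, rfl⟩ : ∃ t2, rest = α :: t2 := by
          cases rest with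
          | nil => simp at hrh
          | cons c t2 => exact ⟨t2, by rw [show c = α by simpa using hrh]⟩
        exact Or.inr (mem2 hb hα hd hn ht hinf)
      · exact Or.inl (mem1 hb hd hn ht hinf hrh)

/-- The key pointwise partition identity. -/
lemma indicator_eq {b α n : ℕ} (hb : 2 ≤ b) (hα : α < b) (hn : 0 < n) (m : ℕ) :
    Set.indicator (SU b α n) gE m
      = Set.indicator {n} gE m
        + ∑ d ∈ (Finset.range b).erase α,
            (Set.indicator (SU b α (n * b + d)) gE m
              + Set.indicator (SU b α (n * b ^ 2 + d * b + α)) gE m) := by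
  by_cases hm : m ∈ SU b α n
  · rw [Set.indicator_of_mem hm]
    obtain ⟨t, ht, hinf, hhead⟩ := hm
    cases t with
    | nil =>
      have hmn : m = n := digitsBE_inj (by simpa using ht)
      rw [Set.indicator_of_mem (by simp [hmn] : m ∈ ({n} : Set ℕ))]
      rw [Finset.sum_eq_zero, add_zero]
      intro d hdm
      have hd : d < b := by
        simp only [Finset.mem_erase, Finset.mem_range] at hdm
        exact hdm.2
      rw [Set.indicator_of_notMem, Set.indicator_of_notMem, add_zero]
      · intro h
        obtain ⟨t', ht'⟩ := char2 hb hα hd hn ht h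
        simp at ht'
      · intro h
        obtain ⟨t', ht', -⟩ := char1 hb hd hn ht h
        simp at ht'
    | cons d rest =>
      have hd : d < b := digit_lt hb ht (by simp)
      have hda : d ≠ α := by simpa using hhead
      have hdm : d ∈ (Finset.range b).erase α := by simp [Finset.mem_erase, hda, hd]
      have hmn : m ∉ ({n} : Set ℕ) := by
        intro h
        have h1 := len_eq ht
        have h2 : m = n := h
        rw [h2] at h1
        simp at h1
      rw [Set.indicator_of_notMem hmn, zero_add]
      rw [Finset.sum_eq_single_of_mem d hdm]
      · by_cases hrh : rest.head? = some α
        · obtain ⟨t2, rfl⟩ : ∃ t2, rest = α :: t2 := by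
            cases rest with
            | nil => simp at hrh
            | cons c t2 => exact ⟨t2, by rw [show c = α by simpa using hrh]⟩
          rw [Set.indicator_of_notMem, zero_add,
            Set.indicator_of_mem (mem2 hb hα hd hn ht hinf)]
          intro h
          obtain ⟨t', ht', hh⟩ := char1 hb hd hn ht h
          rw [List.cons.injEq] at ht'
          rw [← ht'.2] at hh
          simp at hh
        · rw [Set.indicator_of_mem (mem1 hb hd hn ht hinf hrh),
            Set.indicator_of_notMem, add_zero]
          intro h
          obtain ⟨t', ht'⟩ := char2 hb hα hd hn ht h
          rw [List.cons.injEq] at ht'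
          rw [ht'.2] at hrh
          simp at hrh
      · intro d' hd'm hd'd
        have hd' : d' < b := by
          simp only [Finset.mem_erase, Finset.mem_range] at hd'm
          exact hd'm.2
        rw [Set.indicator_of_notMem, Set.indicator_of_notMem, add_zero]
        · intro h
          obtain ⟨t', ht'⟩ := char2 hb hα hd' hn ht h
          rw [List.cons.injEq] at ht'
          exact hd'd ht'.1.symm
        · intro h
          obtain ⟨t', ht', -⟩ := char1 hb hd' hn ht h
          rw [List.cons.injEq] at ht'
          exact hd'd ht'.1.symm
  · rw [Set.indicator_of_notMem hm, Set.indicator_of_notMem, zero_add]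
    · rw [Finset.sum_eq_zero]
      intro d hdm
      simp only [Finset.mem_erase, Finset.mem_range] at hdm
      rw [Set.indicator_of_notMem, Set.indicator_of_notMem, add_zero]
      · exact fun h => hm (sub2 hb hα hn hdm.2 hdm.1 h)
      · exact fun h => hm (sub1 hb hn hdm.2 hdm.1 h)
    · intro h
      have : m = n := h
      exact hm (this ▸ n_mem_SU)

lemma tsum_ind_singleton (n : ℕ) :
    ∑' m : ℕ, Set.indicator ({n} : Set ℕ) gE m = gE n := by
  rw [← tsum_subtype]
  exact tsum_singleton n gE

/-- The recursion for `VE`. -/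
lemma VE_rec {b α n : ℕ} (hb : 2 ≤ b) (hα : α < b) (hn : 0 < n) :
    VE b α n = gE n + ∑ d ∈ (Finset.range b).erase α,
      (VE b α (n * b + d) + VE b α (n * b ^ 2 + d * b + α)) := by
  unfold VE
  rw [tsum_congr (indicator_eq hb hα hn), ENNReal.tsum_add,
    Summable.tsum_finsetSum (fun _ _ => ENNReal.summable), tsum_ind_singleton]
  congr 1
  exact Finset.sum_congr rfl fun d _ => ENNReal.tsum_add

lemma arith {b n : ℕ} (hb : 2 ≤ b) (hn : 0 < n) :
    (n : ℝ≥0∞)⁻¹ + ((b - 1 : ℕ) : ℝ≥0∞) *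
        ((b : ℝ≥0∞) ^ 2 / ((n * b : ℕ) : ℝ≥0∞) + (b : ℝ≥0∞) ^ 2 / ((n * b ^ 2 : ℕ) : ℝ≥0∞))
      = (b : ℝ≥0∞) ^ 2 / (n : ℝ≥0∞) := by
  obtain ⟨e, rfl⟩ : ∃ e, b = e + 2 := ⟨b - 2, by omega⟩
  have hn0 : (n : ℝ≥0∞) ≠ 0 := Nat.cast_ne_zero.mpr hn.ne'
  have hnt : (n : ℝ≥0∞) ≠ ⊤ := ENNReal.natCast_ne_top n
  have hb1 : e + 2 - 1 = e + 1 := rfl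
  rw [hb1]
  push_cast
  set x : ℝ≥0∞ := (e : ℝ≥0∞) + 2 with hxdef
  have hx0 : x ≠ 0 := by
    have h2 : (2 : ℝ≥0∞) ≤ x := le_add_self
    intro h
    rw [h] at h2
    simp at h2
  have hxt : x ≠ ⊤ := ENNReal.add_ne_top.mpr ⟨ENNReal.natCast_ne_top e, by simp⟩
  have hxx : x * x⁻¹ = 1 := ENNReal.mul_inv_cancel hx0 hxt
  have hx20 : x ^ 2 ≠ 0 := pow_ne_zero 2 hx0
  have hx2t : x ^ 2 ≠ ⊤ := ENNReal.pow_ne_top hxt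
  have hxx2 : x ^ 2 * (x ^ 2)⁻¹ = 1 := ENNReal.mul_inv_cancel hx20 hx2t
  have h1 : x ^ 2 / ((n : ℝ≥0∞) * x) = x * (n : ℝ≥0∞)⁻¹ := by
    rw [div_eq_mul_inv, ENNReal.mul_inv (Or.inl hn0) (Or.inl hnt)]
    calc x ^ 2 * ((n : ℝ≥0∞)⁻¹ * x⁻¹) = (x * x⁻¹) * (x * (n : ℝ≥0∞)⁻¹) := by ring
      _ = x * (n : ℝ≥0∞)⁻¹ := by rw [hxx, one_mul]
  have h2 : x ^ 2 / ((n : ℝ≥0∞) * x ^ 2) = (n : ℝ≥0∞)⁻¹ := by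
    rw [div_eq_mul_inv, ENNReal.mul_inv (Or.inl hn0) (Or.inl hnt)]
    calc x ^ 2 * ((n : ℝ≥0∞)⁻¹ * (x ^ 2)⁻¹) = (x ^ 2 * (x ^ 2)⁻¹) * (n : ℝ≥0∞)⁻¹ := by ring
      _ = (n : ℝ≥0∞)⁻¹ := by rw [hxx2, one_mul]
  rw [h1, h2, div_eq_mul_inv, hxdef]
  ring

lemma len_d1 {b n d : ℕ} (hb : 2 ≤ b) (hd : d < b) (hn : 0 < n) :
    (Nat.digits b (n * b + d)).length = (Nat.digits b n).length + 1 := by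
  rw [digits_child hb hd hn]
  simp

lemma len_d2 {b n d : ℕ} (hb : 2 ≤ b) (hd : d < b) (hα : α < b) (hn : 0 < n) :
    (Nat.digits b (n * b ^ 2 + d * b + α)).length = (Nat.digits b n).length + 2 := by
  rw [digits_child2 hb hd hα hn]
  simp

lemma step_pointwise {b α n : ℕ} (hb : 2 ≤ b) (hα : α < b) (hn : 0 < n) (K m : ℕ) :
    Set.indicator (TSU b α n (K + 1)) gE m
      ≤ Set.indicator {n} gE m + ∑ d ∈ (Finset.range b).erase α,
          (Set.indicator (TSU b α (n * b + d) K) gE m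
            + Set.indicator (TSU b α (n * b ^ 2 + d * b + α) K) gE m) := by
  by_cases hm : m ∈ TSU b α n (K + 1)
  case neg =>
    rw [Set.indicator_of_notMem hm]
    exact zero_le
  case pos =>
    rw [Set.indicator_of_mem hm]
    obtain ⟨hmS, hlen⟩ := hm
    rcases cover hb hn hmS with rfl | ⟨d, hdm, hc⟩
    · calc gE m = Set.indicator {m} gE m := (Set.indicator_of_mem rfl gE).symm
        _ ≤ _ := le_self_add
    · have hd : d < b := by
        simp only [Finset.mem_erase, Finset.mem_range] at hdm
        exact hdm.2
      have hterm : gE m ≤ Set.indicator (TSU b α (n * b + d) K) gE m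
          + Set.indicator (TSU b α (n * b ^ 2 + d * b + α) K) gE m := by
        rcases hc with h | h
        · have hmem : m ∈ TSU b α (n * b + d) K := ⟨h, by rw [len_d1 hb hd hn]; omega⟩
          rw [Set.indicator_of_mem hmem]
          exact le_self_add
        · have hmem : m ∈ TSU b α (n * b ^ 2 + d * b + α) K :=
            ⟨h, by rw [len_d2 hb hd hα hn]; omega⟩
          rw [Set.indicator_of_mem hmem]
          exact le_add_self
      refine hterm.trans ((Finset.single_le_sum
        (f := fun d => Set.indicator (TSU b α (n * b + d) K) gE m
          + Set.indicator (TSU b α (n * b ^ 2 + d * b + α) K) gE m)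
        (fun i _ => zero_le) hdm).trans le_add_self)

lemma VEK_le {b α : ℕ} (hb : 2 ≤ b) (hα : α < b) :
    ∀ K n, 0 < n → VEK b α n K ≤ (b : ℝ≥0∞) ^ 2 / (n : ℝ≥0∞) := by
  intro K
  induction K with
  | zero =>
    intro n hn
    have hsub : TSU b α n 0 ⊆ {n} := by
      rintro m ⟨⟨t, ht, -, -⟩, hlen⟩
      have h1 := len_eq ht
      have ht0 : t = [] := List.length_eq_zero_iff.mp (by omega)
      subst ht0
      exact digitsBE_inj (by simpa using ht)
    calc VEK b α n 0 ≤ ∑' m : ℕ, Set.indicator {n} gE m :=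
        ENNReal.tsum_le_tsum fun m =>
          Set.indicator_le_indicator_of_subset hsub (fun a => zero_le) m
      _ = gE n := tsum_ind_singleton n
      _ ≤ (b : ℝ≥0∞) ^ 2 / (n : ℝ≥0∞) := by
        rw [div_eq_mul_inv]
        have hb1 : (1 : ℝ≥0∞) ≤ (b : ℝ≥0∞) := by
          exact_mod_cast Nat.one_le_cast.mpr (by omega)
        have h1 : (1 : ℝ≥0∞) ≤ (b : ℝ≥0∞) ^ 2 := by
          calc (1 : ℝ≥0∞) = 1 * 1 := (one_mul 1).symm
            _ ≤ (b : ℝ≥0∞) * (b : ℝ≥0∞) := mul_le_mul' hb1 hb1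
            _ = (b : ℝ≥0∞) ^ 2 := (sq _).symm
        calc gE n = 1 * (n : ℝ≥0∞)⁻¹ := (one_mul _).symm
          _ ≤ (b : ℝ≥0∞) ^ 2 * (n : ℝ≥0∞)⁻¹ := mul_le_mul_left h1 _
  | succ K ih =>
    intro n hn
    have hnb : 1 * 1 ≤ n * b := Nat.mul_le_mul hn (by omega)
    calc VEK b α n (K + 1)
        ≤ ∑' m : ℕ, (Set.indicator {n} gE m + ∑ d ∈ (Finset.range b).erase α,
            (Set.indicator (TSU b α (n * b + d) K) gE m
              + Set.indicator (TSU b α (n * b ^ 2 + d * b + α) K) gE m)) :=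
          ENNReal.tsum_le_tsum (step_pointwise hb hα hn K)
      _ = gE n + ∑ d ∈ (Finset.range b).erase α,
            (VEK b α (n * b + d) K + VEK b α (n * b ^ 2 + d * b + α) K) := by
          rw [ENNReal.tsum_add, Summable.tsum_finsetSum (fun _ _ => ENNReal.summable), tsum_ind_singleton]
          congr 1
          exact Finset.sum_congr rfl fun d _ => ENNReal.tsum_add
      _ ≤ gE n + ∑ d ∈ (Finset.range b).erase α,
            ((b : ℝ≥0∞) ^ 2 / ((n * b : ℕ) : ℝ≥0∞)
              + (b : ℝ≥0∞) ^ 2 / ((n * b ^ 2 : ℕ) : ℝ≥0∞)) := by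
          refine add_le_add_right (Finset.sum_le_sum fun d hdm => ?_) _
          have hd : d < b := by
            simp only [Finset.mem_erase, Finset.mem_range] at hdm
            exact hdm.2
          have c1pos : 0 < n * b + d := by omega
          have c2pos : 0 < n * b ^ 2 + d * b + α := by
            have : 1 * 1 ≤ n * b ^ 2 := Nat.mul_le_mul hn (by nlinarith)
            omega
          refine add_le_add ((ih _ c1pos).trans ?_) ((ih _ c2pos).trans ?_)
          · exact ENNReal.div_le_div_left
              (by exact_mod_cast Nat.le_add_right (n * b) d) _
          · exact ENNReal.div_le_div_left
              (by exact_mod_cast (by omega : n * b ^ 2 ≤ n * b ^ 2 + d * b + α)) _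
      _ = gE n + ((b - 1 : ℕ) : ℝ≥0∞) * ((b : ℝ≥0∞) ^ 2 / ((n * b : ℕ) : ℝ≥0∞)
            + (b : ℝ≥0∞) ^ 2 / ((n * b ^ 2 : ℕ) : ℝ≥0∞)) := by
          rw [Finset.sum_const, Finset.card_erase_of_mem (Finset.mem_range.mpr hα),
            Finset.card_range, nsmul_eq_mul]
      _ = (b : ℝ≥0∞) ^ 2 / (n : ℝ≥0∞) := arith hb hn

lemma VE_le {b α n : ℕ} (hb : 2 ≤ b) (hα : α < b) (hn : 0 < n) :
    VE b α n ≤ (b : ℝ≥0∞) ^ 2 / (n : ℝ≥0∞) := by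
  rw [VE, ENNReal.tsum_eq_iSup_sum]
  refine iSup_le fun F => ?_
  set K := F.sup fun m => (Nat.digits b m).length with hK
  refine le_trans ?_ (VEK_le hb hα K n hn)
  rw [VEK]
  refine le_trans (Finset.sum_le_sum fun m hmF => ?_) (ENNReal.sum_le_tsum F)
  by_cases hm : m ∈ SU b α n
  · have hlen : (Nat.digits b m).length ≤ (Nat.digits b n).length + K := by
      have h1 : (Nat.digits b m).length ≤ K :=
        Finset.le_sup (f := fun m => (Nat.digits b m).length) hmF
      omega
    have hmem : m ∈ TSU b α n K := ⟨hm, hlen⟩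
    rw [Set.indicator_of_mem hm, Set.indicator_of_mem hmem]
  · rw [Set.indicator_of_notMem hm]
    exact zero_le

lemma VE_ne_top {b α n : ℕ} (hb : 2 ≤ b) (hα : α < b) (hn : 0 < n) : VE b α n ≠ ⊤ :=
  ((VE_le hb hα hn).trans_lt (ENNReal.div_lt_top
    (ENNReal.pow_ne_top (ENNReal.natCast_ne_top b)) (Nat.cast_ne_zero.mpr hn.ne'))).ne

lemma zero_not_mem {b α n : ℕ} (hn : 0 < n) : (0 : ℕ) ∉ SU b α n := by
  rintro ⟨t, ht, -, -⟩
  have h0 : digitsBE b 0 = [] := by simp [digitsBE]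
  rw [h0] at ht
  have hlen := congrArg List.length ht
  simp only [digitsBE, List.length_reverse, List.length_nil, List.length_append] at hlen
  have hdn : Nat.digits b n = [] := List.length_eq_zero_iff.mp (by omega)
  have := Nat.digits_eq_nil_iff_eq_zero.mp hdn
  omega

lemma U_eq_toReal {b α n : ℕ} (hb : 2 ≤ b) (hα : α < b) (hn : 0 < n) :
    U b α n = (VE b α n).toReal := by
  have h0 : ∀ m : ℕ, Set.indicator (SU b α n) gE m ≠ ⊤ := by
    intro m
    by_cases hm : m ∈ SU b α n
    · rw [Set.indicator_of_mem hm]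
      have hm0 : m ≠ 0 := fun h => zero_not_mem hn (h ▸ hm)
      simp [gE, hm0]
    · simp [Set.indicator_of_notMem hm]
  have h1 : U b α n = ∑' m : ℕ, Set.indicator (SU b α n) (fun m => (1 : ℝ) / (m : ℝ)) m :=
    tsum_subtype (SU b α n) (fun m => (1 : ℝ) / (m : ℝ))
  rw [h1, VE, ENNReal.tsum_toReal_eq h0]
  refine tsum_congr fun m => ?_
  by_cases hm : m ∈ SU b α n
  · rw [Set.indicator_of_mem hm, Set.indicator_of_mem hm]
    simp [gE, ENNReal.toReal_inv, one_div]
  · rw [Set.indicator_of_notMem hm, Set.indicator_of_notMem hm]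
    simp

end Stmt15

theorem stmt_15 (b : ℕ) (hb : 2 ≤ b) (α : ℕ) (hα : α < b) (n : ℕ) (hn : 0 < n) :
    U b α n = 1 / n + ∑ d ∈ (Finset.range b).erase α,
      (U b α (n * b + d) + U b α (n * b ^ 2 + d * b + α)) := by
  classical
  have hc1 : ∀ d ∈ (Finset.range b).erase α, 0 < n * b + d := by
    intro d hd
    have : 1 * 1 ≤ n * b := Nat.mul_le_mul hn (by omega)
    omega
  have hc2 : ∀ d ∈ (Finset.range b).erase α, 0 < n * b ^ 2 + d * b + α := by
    intro d hd
    have : 1 * 1 ≤ n * b ^ 2 := Nat.mul_le_mul hn (by nlinarith)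
    omega
  have hne : ∀ d ∈ (Finset.range b).erase α,
      Stmt15.VE b α (n * b + d) + Stmt15.VE b α (n * b ^ 2 + d * b + α) ≠ ⊤ := fun d hd =>
    ENNReal.add_ne_top.mpr ⟨Stmt15.VE_ne_top hb hα (hc1 d hd), Stmt15.VE_ne_top hb hα (hc2 d hd)⟩
  have hgne : Stmt15.gE n ≠ ⊤ := by
    simp [Stmt15.gE, hn.ne']
  rw [Stmt15.U_eq_toReal hb hα hn, Stmt15.VE_rec hb hα hn]
  rw [ENNReal.toReal_add hgne (by
    rw [ne_eq, ENNReal.sum_eq_top]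
    push_neg
    exact fun d hd => hne d hd)]
  rw [ENNReal.toReal_sum hne]
  congr 1
  · simp [Stmt15.gE, ENNReal.toReal_inv, one_div]
  · refine Finset.sum_congr rfl fun d hd => ?_
    rw [ENNReal.toReal_add (Stmt15.VE_ne_top hb hα (hc1 d hd))
        (Stmt15.VE_ne_top hb hα (hc2 d hd)),
      ← Stmt15.U_eq_toReal hb hα (hc1 d hd), ← Stmt15.U_eq_toReal hb hα (hc2 d hd)]
end

section
/- Let b ≥ 2, α a digit, and define for positive integers n: V(n) = Σ 1/m over m whose leading l(n) digits form n, whose trailing string contains exactly one occurrence of αα and whose trailing string's leading digit is not α; and U(n) as the analogous sum with trailing string avoiding αα and not starting with α. Then V(n) = Σ_{d ≠ α} ( V(nb+d) + V(nb²+db+α) + U(nb³+db²+αb+α) ). -/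
/-- `m`'s leading digits form `n` and the trailing digit string has exactly one
contiguous occurrence of `αα` and does not start with `α`. -/
def KeptV (b α n m : ℕ) : Prop :=
  ∃ t : List ℕ, digitsBE b m = digitsBE b n ++ t ∧
    (t.zip t.tail).count (α, α) = 1 ∧ t.head? ≠ some α

noncomputable def V (b α n : ℕ) : ℝ :=
  ∑' m : {m : ℕ // KeptV b α n m}, (1 : ℝ) / (m : ℕ)

namespace Scratch
variable {b α : ℕ}

lemma digitsBE_mul_add (hb : 1 < b) {n : ℕ} (hn : 0 < n) {d : ℕ} (hd : d < b) :
    digitsBE b (n * b + d) = digitsBE b n ++ [d] := by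
  unfold digitsBE
  rw [Nat.digits_def' hb (by positivity)]
  have h1 : (n * b + d) % b = d := by
    rw [Nat.add_comm, Nat.add_mul_mod_self_right]
    exact Nat.mod_eq_of_lt hd
  have h2 : (n * b + d) / b = n := by
    rw [Nat.add_comm, Nat.add_mul_div_right _ _ (by omega), Nat.div_eq_of_lt hd]; omega
  rw [h1, h2, List.reverse_cons]

lemma digitsBE_mul_add2 (hb : 1 < b) {n : ℕ} (hn : 0 < n) {d e : ℕ} (hd : d < b) (he : e < b) :
    digitsBE b (n * b ^ 2 + d * b + e) = digitsBE b n ++ [d, e] := by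
  have : n * b ^ 2 + d * b + e = (n * b + d) * b + e := by ring
  rw [this, digitsBE_mul_add hb (by positivity) he, digitsBE_mul_add hb hn hd]
  simp

lemma digitsBE_mul_add3 (hb : 1 < b) {n : ℕ} (hn : 0 < n) {d e g : ℕ} (hd : d < b) (he : e < b)
    (hg : g < b) :
    digitsBE b (n * b ^ 3 + d * b ^ 2 + e * b + g) = digitsBE b n ++ [d, e, g] := by
  have : n * b ^ 3 + d * b ^ 2 + e * b + g = ((n * b + d) * b + e) * b + g := by ring
  rw [this, digitsBE_mul_add hb (by positivity) hg, digitsBE_mul_add hb (by positivity) he,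
    digitsBE_mul_add hb hn hd]
  simp

lemma digitsBE_inj (hb : 1 < b) {m m' : ℕ} (h : digitsBE b m = digitsBE b m') : m = m' := by
  have := congrArg List.reverse h
  simp only [digitsBE, List.reverse_reverse] at this
  have h2 := congrArg (Nat.ofDigits b) this
  rwa [Nat.ofDigits_digits, Nat.ofDigits_digits] at h2

lemma mem_digitsBE_lt (hb : 1 < b) {m x : ℕ} (hx : x ∈ digitsBE b m) : x < b :=
  Nat.digits_lt_base hb (by simpa [digitsBE] using hx)

lemma length_digitsBE_mul_add (hb : 1 < b) {n : ℕ} (hn : 0 < n) {d : ℕ} (hd : d < b) :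
    (Nat.digits b (n * b + d)).length = (Nat.digits b n).length + 1 := by
  have := congrArg List.length (digitsBE_mul_add hb hn hd)
  simpa [digitsBE] using this

variable (α : ℕ)

def cnt (α : ℕ) (t : List ℕ) : ℕ := (t.zip t.tail).count (α, α)

lemma cnt_nil : cnt α [] = 0 := rfl
lemma cnt_single (x : ℕ) : cnt α [x] = 0 := rfl

lemma cnt_cons_cons (x y : ℕ) (t : List ℕ) :
    cnt α (x :: y :: t) = (if x = α ∧ y = α then 1 else 0) + cnt α (y :: t) := by
  show ((x,y) :: (y::t).zip t).count (α, α) = _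
  rw [List.count_cons]
  by_cases h : x = α ∧ y = α
  · simp [h, cnt, Prod.ext_iff, Nat.add_comm]
  · have : ¬ ((x, y) = (α, α)) := by simp [Prod.ext_iff]; tauto
    simp [this, cnt, Prod.ext_iff]
    intro h1 h2
    exact absurd ⟨h1, h2⟩ h

lemma cnt_cons_of_ne {x : ℕ} (hx : x ≠ α) (u : List ℕ) : cnt α (x :: u) = cnt α u := by
  cases u with
  | nil => rfl
  | cons y t => rw [cnt_cons_cons]; simp [hx]

lemma cnt_cons_of_head {u : List ℕ} (hu : u.head? ≠ some α) (x : ℕ) :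
    cnt α (x :: u) = cnt α u := by
  cases u with
  | nil => rfl
  | cons y t =>
    have : y ≠ α := by simpa using hu
    rw [cnt_cons_cons]; simp [this]

lemma cnt_pos_iff_infix (t : List ℕ) : [α, α] <:+: t ↔ (α, α) ∈ t.zip t.tail := by
  induction t with
  | nil => simp
  | cons x u ih =>
    rw [List.infix_cons_iff]
    cases u with
    | nil => simp [List.IsPrefix]
    | cons y v =>
      rw [show (x :: y :: v).tail = y :: v from rfl, List.zip_cons_cons, List.mem_cons]
      constructor
      · rintro (h | h)
        · rw [List.cons_prefix_cons] at h
          obtain ⟨rfl, h⟩ := h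
          rw [List.cons_prefix_cons] at h
          obtain ⟨rfl, -⟩ := h
          exact Or.inl rfl
        · exact Or.inr (ih.mp h)
      · rintro (h | h)
        · obtain ⟨h1, h2⟩ := Prod.mk.injEq .. ▸ h
          left
          rw [List.cons_prefix_cons]
          exact ⟨h1, by rw [List.cons_prefix_cons]; exact ⟨h2, List.nil_prefix⟩⟩
        · exact Or.inr (ih.mpr h)

lemma length_zip_tail (t : List ℕ) : (t.zip t.tail).length = t.length - 1 := by
  cases t with
  | nil => rfl
  | cons x u => simp [List.length_zip]

lemma keptU_iff_cnt (b α n m : ℕ) :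
    KeptU b α n m ↔ ∃ t : List ℕ, digitsBE b m = digitsBE b n ++ t ∧ cnt α t = 0 ∧
      t.head? ≠ some α := by
  unfold KeptU
  refine exists_congr fun t => and_congr_right fun _ => and_congr_left fun _ => ?_
  rw [cnt_pos_iff_infix]
  constructor
  · intro h; exact List.count_eq_zero.mpr h
  · intro h; exact List.count_eq_zero.mp h

lemma keptV_cnt (b α n m : ℕ) :
    KeptV b α n m ↔ ∃ t : List ℕ, digitsBE b m = digitsBE b n ++ t ∧ cnt α t = 1 ∧
      t.head? ≠ some α := Iff.rfl

variable {n m : ℕ} (hb : 2 ≤ b) (hα : α < b) (hn : 0 < n)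
include hb hα hn

lemma keptV_struct :
    KeptV b α n m ↔ ∃ d, d < b ∧ d ≠ α ∧
      (KeptV b α (n * b + d) m ∨ KeptV b α (n * b ^ 2 + d * b + α) m ∨
        KeptU b α (n * b ^ 3 + d * b ^ 2 + α * b + α) m) := by
  have hb1 : 1 < b := hb
  rw [keptV_cnt]
  constructor
  · rintro ⟨t, ht, hc, hh⟩
    match t with
    | [] => rw [cnt_nil] at hc; omega
    | x :: u =>
      have hx : x ≠ α := by simpa using hh
      have hxb : x < b := mem_digitsBE_lt hb1 (by rw [ht]; simp)
      rw [cnt_cons_of_ne α hx] at hc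
      refine ⟨x, hxb, hx, ?_⟩
      match u with
      | [] => rw [cnt_nil] at hc; omega
      | y :: v =>
        by_cases hy : y = α
        · rw [hy] at ht hc
          match v with
          | [] => rw [cnt_single] at hc; omega
          | z :: w =>
            by_cases hz : z = α
            · rw [hz] at ht hc
              rw [cnt_cons_cons, if_pos ⟨rfl, rfl⟩] at hc
              have hc0 : cnt α (α :: w) = 0 := by omega
              have hw : w.head? ≠ some α := by
                match w with
                | [] => simp
                | a :: w' =>
                  intro hcon
                  have ha : a = α := by simpa using hcon
                  rw [ha] at hc0
                  rw [cnt_cons_cons, if_pos ⟨rfl, rfl⟩] at hc0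
                  omega
              have hcw : cnt α w = 0 := by rwa [cnt_cons_of_head α hw] at hc0
              refine Or.inr (Or.inr ?_)
              rw [keptU_iff_cnt]
              exact ⟨w, by rw [digitsBE_mul_add3 hb1 hn hxb hα hα, ht]; simp, hcw, hw⟩
            · rw [cnt_cons_cons, if_neg (fun h => hz h.2), Nat.zero_add] at hc
              refine Or.inr (Or.inl ?_)
              exact ⟨z :: w, by rw [digitsBE_mul_add2 hb1 hn hxb hα, ht]; simp,
                hc, by simpa using hz⟩
        · refine Or.inl ?_
          exact ⟨y :: v, by rw [digitsBE_mul_add hb1 hn hxb, ht]; simp, hc,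
            by simpa using hy⟩
  · rintro ⟨d, hdb, hdα, h | h | h⟩
    · obtain ⟨u, hu, hc, hh⟩ := h
      rw [digitsBE_mul_add hb1 hn hdb] at hu
      exact ⟨d :: u, by rw [hu]; simp, by rw [cnt_cons_of_ne α hdα]; exact hc,
        by simpa using hdα⟩
    · obtain ⟨u, hu, hc, hh⟩ := h
      rw [digitsBE_mul_add2 hb1 hn hdb hα] at hu
      exact ⟨d :: α :: u, by rw [hu]; simp,
        by rw [cnt_cons_of_ne α hdα, cnt_cons_of_head α hh]; exact hc,
        by simpa using hdα⟩
    · rw [keptU_iff_cnt] at h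
      obtain ⟨u, hu, hc, hh⟩ := h
      rw [digitsBE_mul_add3 hb1 hn hdb hα hα] at hu
      refine ⟨d :: α :: α :: u, by rw [hu]; simp, ?_, by simpa using hdα⟩
      rw [cnt_cons_of_ne α hdα, cnt_cons_cons, if_pos ⟨rfl, rfl⟩,
        cnt_cons_of_head α hh, hc]

lemma keptU_struct :
    KeptU b α n m ↔ (m = n ∨ ∃ d, d < b ∧ d ≠ α ∧
      (KeptU b α (n * b + d) m ∨ KeptU b α (n * b ^ 2 + d * b + α) m)) := by
  have hb1 : 1 < b := hb
  rw [keptU_iff_cnt]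
  constructor
  · rintro ⟨t, ht, hc, hh⟩
    match t with
    | [] =>
      refine Or.inl (digitsBE_inj hb1 ?_)
      rw [ht]; simp
    | x :: u =>
      have hx : x ≠ α := by simpa using hh
      have hxb : x < b := mem_digitsBE_lt hb1 (by rw [ht]; simp)
      rw [cnt_cons_of_ne α hx] at hc
      refine Or.inr ⟨x, hxb, hx, ?_⟩
      by_cases hy : u.head? = some α
      · match u with
        | [] => simp at hy
        | y :: v =>
          have hy' : y = α := by simpa using hy
          rw [hy'] at ht hc
          have hv : v.head? ≠ some α := by
            match v with
            | [] => simp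
            | a :: w =>
              intro hcon
              have ha : a = α := by simpa using hcon
              rw [ha] at hc
              rw [cnt_cons_cons, if_pos ⟨rfl, rfl⟩] at hc
              omega
          have hcv : cnt α v = 0 := by rwa [cnt_cons_of_head α hv] at hc
          refine Or.inr ?_
          rw [keptU_iff_cnt]
          exact ⟨v, by rw [digitsBE_mul_add2 hb1 hn hxb hα, ht]; simp, hcv, hv⟩
      · refine Or.inl ?_
        rw [keptU_iff_cnt]
        exact ⟨u, by rw [digitsBE_mul_add hb1 hn hxb, ht]; simp, hc, hy⟩
  · rintro (rfl | ⟨d, hdb, hdα, h | h⟩)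
    · exact ⟨[], by simp, by rw [cnt_nil], by simp⟩
    · rw [keptU_iff_cnt] at h
      obtain ⟨u, hu, hc, hh⟩ := h
      rw [digitsBE_mul_add hb1 hn hdb] at hu
      exact ⟨d :: u, by rw [hu]; simp, by rw [cnt_cons_of_ne α hdα]; exact hc,
        by simpa using hdα⟩
    · rw [keptU_iff_cnt] at h
      obtain ⟨u, hu, hc, hh⟩ := h
      rw [digitsBE_mul_add2 hb1 hn hdb hα] at hu
      exact ⟨d :: α :: u, by rw [hu]; simp,
        by rw [cnt_cons_of_ne α hdα, cnt_cons_of_head α hh]; exact hc,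
        by simpa using hdα⟩

/-- Canonical representation of the three kinds. -/
lemma repr1 {d : ℕ} (hdb : d < b) (h : KeptV b α (n * b + d) m) :
    ∃ u : List ℕ, digitsBE b m = digitsBE b n ++ d :: u ∧ u.head? ≠ some α := by
  obtain ⟨u, hu, -, hh⟩ := h
  rw [digitsBE_mul_add hb hn hdb] at hu
  exact ⟨u, by rw [hu]; simp, hh⟩

lemma repr2 {d : ℕ} (hdb : d < b) (h : KeptV b α (n * b ^ 2 + d * b + α) m) :
    ∃ u : List ℕ, digitsBE b m = digitsBE b n ++ d :: α :: u ∧ u.head? ≠ some α := by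
  obtain ⟨u, hu, -, hh⟩ := h
  rw [digitsBE_mul_add2 hb hn hdb hα] at hu
  exact ⟨u, by rw [hu]; simp, hh⟩

lemma repr3 {d : ℕ} (hdb : d < b) (h : KeptU b α (n * b ^ 3 + d * b ^ 2 + α * b + α) m) :
    ∃ u : List ℕ, digitsBE b m = digitsBE b n ++ d :: α :: α :: u ∧ u.head? ≠ some α := by
  obtain ⟨u, hu, -, hh⟩ := h
  rw [digitsBE_mul_add3 hb hn hdb hα hα] at hu
  exact ⟨u, by rw [hu]; simp, hh⟩

section disj
variable {d d' : ℕ} (hdb : d < b) (hdb' : d' < b)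
include hdb hdb'

lemma disj11 (h : KeptV b α (n * b + d) m) (h' : KeptV b α (n * b + d') m) : d = d' := by
  obtain ⟨u, hu, -⟩ := repr1 α hb hα hn hdb h
  obtain ⟨u', hu', -⟩ := repr1 α hb hα hn hdb' h'
  have := List.append_cancel_left (hu.symm.trans hu')
  exact (List.cons.injEq .. ▸ this).1

lemma disj22 (h : KeptV b α (n * b ^ 2 + d * b + α) m)
    (h' : KeptV b α (n * b ^ 2 + d' * b + α) m) : d = d' := by
  obtain ⟨u, hu, -⟩ := repr2 α hb hα hn hdb h
  obtain ⟨u', hu', -⟩ := repr2 α hb hα hn hdb' h'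
  have := List.append_cancel_left (hu.symm.trans hu')
  exact (List.cons.injEq .. ▸ this).1

lemma disj33 (h : KeptU b α (n * b ^ 3 + d * b ^ 2 + α * b + α) m)
    (h' : KeptU b α (n * b ^ 3 + d' * b ^ 2 + α * b + α) m) : d = d' := by
  obtain ⟨u, hu, -⟩ := repr3 α hb hα hn hdb h
  obtain ⟨u', hu', -⟩ := repr3 α hb hα hn hdb' h'
  have := List.append_cancel_left (hu.symm.trans hu')
  exact (List.cons.injEq .. ▸ this).1

lemma disj12 (h : KeptV b α (n * b + d) m)
    (h' : KeptV b α (n * b ^ 2 + d' * b + α) m) : False := by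
  obtain ⟨u, hu, hh⟩ := repr1 α hb hα hn hdb h
  obtain ⟨u', hu', -⟩ := repr2 α hb hα hn hdb' h'
  have h2 := List.append_cancel_left (hu.symm.trans hu')
  have := (List.cons.injEq .. ▸ h2).2
  rw [this] at hh
  simp at hh

lemma disj13 (h : KeptV b α (n * b + d) m)
    (h' : KeptU b α (n * b ^ 3 + d' * b ^ 2 + α * b + α) m) : False := by
  obtain ⟨u, hu, hh⟩ := repr1 α hb hα hn hdb h
  obtain ⟨u', hu', -⟩ := repr3 α hb hα hn hdb' h'
  have h2 := List.append_cancel_left (hu.symm.trans hu')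
  have := (List.cons.injEq .. ▸ h2).2
  rw [this] at hh
  simp at hh

lemma disj23 (h : KeptV b α (n * b ^ 2 + d * b + α) m)
    (h' : KeptU b α (n * b ^ 3 + d' * b ^ 2 + α * b + α) m) : False := by
  obtain ⟨u, hu, hh⟩ := repr2 α hb hα hn hdb h
  obtain ⟨u', hu', -⟩ := repr3 α hb hα hn hdb' h'
  have h2 := List.append_cancel_left (hu.symm.trans hu')
  have h3 := (List.cons.injEq .. ▸ h2).2
  have := (List.cons.injEq .. ▸ h3).2
  rw [this] at hh
  simp at hh

end disj

open Classical in
noncomputable def clsV (b α n j : ℕ) : Finset ℕ :=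
  (Finset.range (b ^ ((Nat.digits b n).length + j))).filter
    (fun m => KeptV b α n m ∧ (Nat.digits b m).length = (Nat.digits b n).length + j)

open Classical in
noncomputable def clsU (b α n j : ℕ) : Finset ℕ :=
  (Finset.range (b ^ ((Nat.digits b n).length + j))).filter
    (fun m => KeptU b α n m ∧ (Nat.digits b m).length = (Nat.digits b n).length + j)

omit hα hn in
lemma mem_clsV {j : ℕ} :
    m ∈ clsV b α n j ↔ (KeptV b α n m ∧ (Nat.digits b m).length = (Nat.digits b n).length + j) := by
  classical
  constructor
  · intro h
    exact (Finset.mem_filter.mp h).2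
  · intro h
    refine Finset.mem_filter.mpr ⟨Finset.mem_range.mpr ?_, h⟩
    rw [← h.2]
    exact Nat.lt_base_pow_length_digits hb
omit hα hn in
lemma mem_clsU {j : ℕ} :
    m ∈ clsU b α n j ↔ (KeptU b α n m ∧ (Nat.digits b m).length = (Nat.digits b n).length + j) := by
  classical
  constructor
  · intro h
    exact (Finset.mem_filter.mp h).2
  · intro h
    refine Finset.mem_filter.mpr ⟨Finset.mem_range.mpr ?_, h⟩
    rw [← h.2]
    exact Nat.lt_base_pow_length_digits hb

omit hα hn in
lemma trailing_length {t : List ℕ} (ht : digitsBE b m = digitsBE b n ++ t) :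
    (Nat.digits b m).length = (Nat.digits b n).length + t.length := by
  have := congrArg List.length ht
  simpa [digitsBE] using this

omit hb hα hn in
lemma cnt_short {t : List ℕ} (hlen : t.length ≤ 2) (hh : t.head? ≠ some α) : cnt α t = 0 := by
  match t with
  | [] => rfl
  | [x] => rfl
  | [x, y] =>
    have hx : x ≠ α := by simpa using hh
    rw [cnt_cons_of_ne α hx, cnt_single]
  | x :: y :: z :: w => simp at hlen

omit hα hn in
lemma clsV_small {j : ℕ} (hj : j ≤ 2) : clsV b α n j = ∅ := by
  rw [Finset.eq_empty_iff_forall_notMem]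
  intro m hm
  obtain ⟨⟨t, ht, hc, hh⟩, hlen⟩ := (mem_clsV (α := α) hb).mp hm
  have hlt : t.length = j := by
    have := trailing_length hb ht
    omega
  have := cnt_short (α := α) (by omega) hh
  rw [cnt] at this
  omega

lemma clsV_subset (j : ℕ) :
    clsV b α n (j + 3) ⊆ ((Finset.range b).erase α).biUnion (fun d =>
      clsV b α (n * b + d) (j + 2) ∪ clsV b α (n * b ^ 2 + d * b + α) (j + 1) ∪
        clsU b α (n * b ^ 3 + d * b ^ 2 + α * b + α) j) := by
  intro m hm
  obtain ⟨hk, hlen⟩ := (mem_clsV (α := α) hb).mp hm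
  obtain ⟨d, hdb, hdα, h⟩ := (keptV_struct (α := α) hb hα hn).mp hk
  refine Finset.mem_biUnion.mpr ⟨d, Finset.mem_erase.mpr ⟨hdα, Finset.mem_range.mpr hdb⟩, ?_⟩
  have l1 : (Nat.digits b (n * b + d)).length = (Nat.digits b n).length + 1 :=
    length_digitsBE_mul_add hb hn hdb
  have l2 : (Nat.digits b (n * b ^ 2 + d * b + α)).length = (Nat.digits b n).length + 2 := by
    have := congrArg List.length (digitsBE_mul_add2 (b := b) hb hn hdb hα)
    simpa [digitsBE] using this
  have l3 : (Nat.digits b (n * b ^ 3 + d * b ^ 2 + α * b + α)).length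
      = (Nat.digits b n).length + 3 := by
    have := congrArg List.length (digitsBE_mul_add3 (b := b) hb hn hdb hα hα)
    simpa [digitsBE] using this
  rcases h with h | h | h
  · exact Finset.mem_union_left _ (Finset.mem_union_left _
      ((mem_clsV (α := α) hb).mpr ⟨h, by omega⟩))
  · exact Finset.mem_union_left _ (Finset.mem_union_right _
      ((mem_clsV (α := α) hb).mpr ⟨h, by omega⟩))
  · exact Finset.mem_union_right _ ((mem_clsU (α := α) hb).mpr ⟨h, by omega⟩)

lemma clsU_subset (j : ℕ) :
    clsU b α n (j + 2) ⊆ ((Finset.range b).erase α).biUnion (fun d =>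
      clsU b α (n * b + d) (j + 1) ∪ clsU b α (n * b ^ 2 + d * b + α) j) := by
  intro m hm
  obtain ⟨hk, hlen⟩ := (mem_clsU (α := α) hb).mp hm
  rcases (keptU_struct (α := α) hb hα hn).mp hk with rfl | ⟨d, hdb, hdα, h⟩
  · omega
  refine Finset.mem_biUnion.mpr ⟨d, Finset.mem_erase.mpr ⟨hdα, Finset.mem_range.mpr hdb⟩, ?_⟩
  have l1 : (Nat.digits b (n * b + d)).length = (Nat.digits b n).length + 1 :=
    length_digitsBE_mul_add hb hn hdb
  have l2 : (Nat.digits b (n * b ^ 2 + d * b + α)).length = (Nat.digits b n).length + 2 := by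
    have := congrArg List.length (digitsBE_mul_add2 (b := b) hb hn hdb hα)
    simpa [digitsBE] using this
  rcases h with h | h
  · exact Finset.mem_union_left _ ((mem_clsU (α := α) hb).mpr ⟨h, by omega⟩)
  · exact Finset.mem_union_right _ ((mem_clsU (α := α) hb).mpr ⟨h, by omega⟩)

omit hα hn in
lemma clsU_zero : clsU b α n 0 ⊆ {n} := by
  intro m hm
  obtain ⟨⟨t, ht, -, -⟩, hlen⟩ := (mem_clsU (α := α) hb).mp hm
  have hlt : t.length = 0 := by
    have := trailing_length hb ht
    omega
  rw [List.length_eq_zero_iff] at hlt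
  subst hlt
  rw [List.append_nil] at ht
  simp [digitsBE_inj hb ht]

lemma clsU_one : clsU b α n 1 ⊆ ((Finset.range b).erase α).image (fun d => n * b + d) := by
  intro m hm
  obtain ⟨⟨t, ht, -, hh⟩, hlen⟩ := (mem_clsU (α := α) hb).mp hm
  have hlt : t.length = 1 := by
    have := trailing_length hb ht
    omega
  rw [List.length_eq_one_iff] at hlt
  obtain ⟨d, rfl⟩ := hlt
  have hdb : d < b := mem_digitsBE_lt hb (by rw [ht]; simp)
  have hdα : d ≠ α := by simpa using hh
  rw [← digitsBE_mul_add (b := b) hb hn hdb] at ht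
  refine Finset.mem_image.mpr ⟨d, Finset.mem_erase.mpr ⟨hdα, Finset.mem_range.mpr hdb⟩, ?_⟩
  exact (digitsBE_inj hb ht).symm

noncomputable def rr (b : ℕ) : ℝ := (b : ℝ) - 1 / (2 * b)

omit hα hn in
lemma rr_facts : 1 ≤ rr b ∧ (b : ℝ) - 1 ≤ rr b ∧ ((b : ℝ) - 1) * (rr b + 1) ≤ rr b ^ 2 := by
  have hb2 : (2 : ℝ) ≤ b := by exact_mod_cast hb
  unfold rr
  have h0 : (0:ℝ) < 2 * b := by linarith
  have h1 : 1 / (2 * (b:ℝ)) ≤ 1 / 4 := by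
    rw [div_le_div_iff₀ h0 (by norm_num)]
    linarith
  have h2 : 0 < 1 / (2 * (b:ℝ)) := by positivity
  refine ⟨by linarith, by linarith, ?_⟩
  have expand : ((b:ℝ) - 1 / (2*b)) ^ 2 = (b:ℝ)^2 - 1 + (1/(2*b))^2 := by
    field_simp
    ring
  rw [expand]
  have : ((b:ℝ) - 1) * ((b - 1/(2*b)) + 1) = (b:ℝ)^2 - 1 - ((b:ℝ) - 1) * (1/(2*b)) := by ring
  rw [this]
  have : 0 ≤ ((b:ℝ) - 1) * (1/(2*b)) := mul_nonneg (by linarith) (by positivity)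
  nlinarith [sq_nonneg (1/(2*(b:ℝ)))]

lemma card_bound : ∀ j : ℕ, ∀ n : ℕ, 0 < n →
    ((clsU b α n j).card : ℝ) ≤ rr b ^ j ∧ ((clsV b α n j).card : ℝ) ≤ j * rr b ^ j := by
  obtain ⟨hr1, hbr, hk⟩ := rr_facts hb
  have hr0 : (0:ℝ) ≤ rr b := by linarith
  have hbR : (1:ℝ) ≤ (b:ℝ) - 1 := by
    have : (2:ℝ) ≤ b := by exact_mod_cast hb
    linarith
  have cardE : (((Finset.range b).erase α).card : ℝ) = (b : ℝ) - 1 := by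
    rw [Finset.card_erase_of_mem (Finset.mem_range.mpr hα), Finset.card_range]
    have hb1 : 1 ≤ b := by omega
    push_cast [Nat.cast_sub hb1]
    ring
  intro j
  induction j using Nat.strong_induction_on with
  | _ j IH =>
    intro n hn
    match j with
    | 0 =>
      constructor
      · have := Finset.card_le_card (clsU_zero (α := α) hb (n := n))
        simp only [Finset.card_singleton] at this
        calc ((clsU b α n 0).card : ℝ) ≤ 1 := by exact_mod_cast this
          _ = rr b ^ 0 := by norm_num
      · rw [clsV_small (α := α) hb (by norm_num)]
        simp
    | 1 =>
      constructor
      · have h1 := Finset.card_le_card (clsU_one (α := α) hb hα hn)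
        have h2 := Finset.card_image_le (s := (Finset.range b).erase α)
          (f := fun d => n * b + d)
        have : ((clsU b α n 1).card : ℝ) ≤ (((Finset.range b).erase α).card : ℝ) := by
          exact_mod_cast le_trans h1 h2
        rw [cardE] at this
        calc ((clsU b α n 1).card : ℝ) ≤ (b:ℝ) - 1 := this
          _ ≤ rr b := hbr
          _ = rr b ^ 1 := (pow_one _).symm
      · rw [clsV_small (α := α) hb (by norm_num)]
        simp [hr0]
    | Nat.succ (Nat.succ j') =>
      -- j = j' + 2
      have hUrec : ((clsU b α n (j' + 2)).card : ℝ) ≤ rr b ^ (j' + 2) := by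
        have hsub := clsU_subset (α := α) hb hα hn j'
        have h1 : (clsU b α n (j' + 2)).card ≤
            ∑ d ∈ (Finset.range b).erase α,
              ((clsU b α (n * b + d) (j' + 1)).card +
                (clsU b α (n * b ^ 2 + d * b + α) j').card) :=
          le_trans (Finset.card_le_card hsub)
            (le_trans Finset.card_biUnion_le
              (Finset.sum_le_sum fun d _ => Finset.card_union_le _ _))
        have h2 : ((clsU b α n (j' + 2)).card : ℝ) ≤
            ∑ d ∈ (Finset.range b).erase α,
              (((clsU b α (n * b + d) (j' + 1)).card : ℝ) +
                ((clsU b α (n * b ^ 2 + d * b + α) j').card : ℝ)) := by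
          exact_mod_cast h1
        have h3 : ((clsU b α n (j' + 2)).card : ℝ) ≤
            ∑ _d ∈ (Finset.range b).erase α, (rr b ^ (j' + 1) + rr b ^ j') := by
          refine le_trans h2 (Finset.sum_le_sum fun d hd => ?_)
          have hd' := Finset.mem_erase.mp hd
          have hdb : d < b := Finset.mem_range.mp hd'.2
          have hp1 : 0 < n * b + d := by positivity
          have hp2 : 0 < n * b ^ 2 + d * b + α := by positivity
          exact add_le_add ((IH (j' + 1) (by omega) _ hp1).1) ((IH j' (by omega) _ hp2).1)
        rw [Finset.sum_const, nsmul_eq_mul, cardE] at h3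
        calc ((clsU b α n (j' + 2)).card : ℝ)
            ≤ ((b:ℝ) - 1) * (rr b ^ (j' + 1) + rr b ^ j') := h3
          _ = ((b:ℝ) - 1) * (rr b + 1) * rr b ^ j' := by ring
          _ ≤ rr b ^ 2 * rr b ^ j' := by
              have hp : (0:ℝ) ≤ rr b ^ j' := by positivity
              exact mul_le_mul_of_nonneg_right hk hp
          _ = rr b ^ (j' + 2) := by ring
      refine ⟨hUrec, ?_⟩
      match j' with
      | 0 =>
        rw [clsV_small (α := α) hb (by norm_num)]
        simp only [Finset.card_empty, Nat.cast_zero]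
        positivity
      | Nat.succ j'' =>
        -- j = j'' + 3
        have hsub := clsV_subset (α := α) hb hα hn j''
        have h1 : (clsV b α n (j'' + 3)).card ≤
            ∑ d ∈ (Finset.range b).erase α,
              ((clsV b α (n * b + d) (j'' + 2)).card +
                (clsV b α (n * b ^ 2 + d * b + α) (j'' + 1)).card +
                (clsU b α (n * b ^ 3 + d * b ^ 2 + α * b + α) j'').card) := by
          refine le_trans (Finset.card_le_card hsub)
            (le_trans Finset.card_biUnion_le (Finset.sum_le_sum fun d _ => ?_))
          refine le_trans (Finset.card_union_le _ _) ?_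
          exact Nat.add_le_add_right (Finset.card_union_le _ _) _
        have h3 : ((clsV b α n (j'' + 3)).card : ℝ) ≤
            ∑ _d ∈ (Finset.range b).erase α,
              (((j'':ℝ) + 2) * rr b ^ (j'' + 2) + ((j'':ℝ) + 1) * rr b ^ (j'' + 1)
                + rr b ^ j'') := by
          have h2 : ((clsV b α n (j'' + 3)).card : ℝ) ≤
              ∑ d ∈ (Finset.range b).erase α,
                (((clsV b α (n * b + d) (j'' + 2)).card : ℝ) +
                  ((clsV b α (n * b ^ 2 + d * b + α) (j'' + 1)).card : ℝ) +
                  ((clsU b α (n * b ^ 3 + d * b ^ 2 + α * b + α) j'').card : ℝ)) := by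
            exact_mod_cast h1
          refine le_trans h2 (Finset.sum_le_sum fun d hd => ?_)
          have hd' := Finset.mem_erase.mp hd
          have hdb : d < b := Finset.mem_range.mp hd'.2
          have hp1 : 0 < n * b + d := by positivity
          have hp2 : 0 < n * b ^ 2 + d * b + α := by positivity
          have hp3 : 0 < n * b ^ 3 + d * b ^ 2 + α * b + α := by positivity
          have i1 := (IH (j'' + 2) (by omega) _ hp1).2
          have i2 := (IH (j'' + 1) (by omega) _ hp2).2
          have i3 := (IH j'' (by omega) _ hp3).1
          push_cast at i1 i2 ⊢
          linarith
        rw [Finset.sum_const, nsmul_eq_mul, cardE] at h3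
        have hpj : (0:ℝ) ≤ rr b ^ j'' := by positivity
        calc ((clsV b α n (j'' + 3)).card : ℝ)
            ≤ ((b:ℝ) - 1) * (((j'':ℝ) + 2) * rr b ^ (j'' + 2)
                + ((j'':ℝ) + 1) * rr b ^ (j'' + 1) + rr b ^ j'') := h3
          _ ≤ ((b:ℝ) - 1) * (((j'':ℝ) + 2) * rr b ^ (j'' + 2)
                + ((j'':ℝ) + 2) * rr b ^ (j'' + 1) + rr b ^ j'') := by
              have : ((j'':ℝ) + 1) * rr b ^ (j'' + 1) ≤ ((j'':ℝ) + 2) * rr b ^ (j'' + 1) := by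
                have : (0:ℝ) ≤ rr b ^ (j'' + 1) := by positivity
                nlinarith
              nlinarith [this]
          _ = ((j'':ℝ) + 2) * (((b:ℝ) - 1) * (rr b + 1) * rr b ^ (j'' + 1))
                + ((b:ℝ) - 1) * rr b ^ j'' := by ring
          _ ≤ ((j'':ℝ) + 2) * (rr b ^ 2 * rr b ^ (j'' + 1)) + rr b * rr b ^ j'' := by
              have hp : (0:ℝ) ≤ rr b ^ (j'' + 1) := by positivity
              have t1 := mul_le_mul_of_nonneg_right hk hp
              have t2 := mul_le_mul_of_nonneg_right hbr hpj
              have hj2 : (0:ℝ) ≤ (j'':ℝ) + 2 := by positivity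
              nlinarith [mul_le_mul_of_nonneg_left t1 hj2]
          _ = ((j'':ℝ) + 2) * rr b ^ (j'' + 3) + rr b ^ (j'' + 1) := by ring
          _ ≤ ((j'':ℝ) + 2) * rr b ^ (j'' + 3) + rr b ^ (j'' + 3) := by
              have := pow_le_pow_right₀ hr1 (by omega : j'' + 1 ≤ j'' + 3)
              linarith
          _ = (((j'' + 3 : ℕ)):ℝ) * rr b ^ (j'' + 3) := by push_cast; ring

omit hα hn in
lemma summable_aux {P : ℕ → Prop} {F : ℕ → Finset ℕ}
    (hL0 : 1 ≤ (Nat.digits b n).length)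
    (ha : ∀ j m, m ∈ F j → (Nat.digits b m).length = (Nat.digits b n).length + j)
    (hbm : ∀ m, P m → m ∈ F ((Nat.digits b m).length - (Nat.digits b n).length))
    (hc : ∀ j, ((F j).card : ℝ) ≤ ((j:ℝ) + 1) * rr b ^ j) :
    Summable (Set.indicator {m | P m} (fun m => (1:ℝ) / m)) := by
  classical
  set L0 := (Nat.digits b n).length
  have hb0 : (0:ℝ) < b := by positivity
  have hq : rr b / b < 1 := by
    rw [div_lt_one hb0]
    unfold rr
    have : 0 < 1 / (2*(b:ℝ)) := by positivity
    linarith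
  have hq0 : 0 ≤ rr b / b := by
    have h1 := (rr_facts hb).1
    have : (0:ℝ) ≤ rr b := by linarith
    positivity
  have hsum : Summable (fun j : ℕ => ((j:ℝ) + 1) * (rr b / b) ^ j) := by
    have h1 : Summable (fun j : ℕ => (j:ℝ) * (rr b / b) ^ j) := by
      have := summable_pow_mul_geometric_of_norm_lt_one (R := ℝ) 1
        (r := rr b / b) (by rwa [Real.norm_eq_abs, abs_of_nonneg hq0])
      simpa using this
    have h2 : Summable (fun j : ℕ => (rr b / b) ^ j) := summable_geometric_of_lt_one hq0 hq
    simpa [add_mul, one_mul] using h1.add h2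
  have hnonneg : ∀ j : ℕ, 0 ≤ ((j:ℝ) + 1) * (rr b / b) ^ j := fun j => by positivity
  refine summable_of_sum_range_le (c := (b:ℝ) * ∑' j : ℕ, ((j:ℝ) + 1) * (rr b / b) ^ j) ?_ ?_
  · intro m
    apply Set.indicator_nonneg
    intro x _
    positivity
  · intro N
    rw [Finset.sum_indicator_eq_sum_filter]
    set s := (Finset.range N).filter (fun m => m ∈ {m | P m}) with hs
    set g : ℕ → ℕ := fun m => (Nat.digits b m).length - L0 with hg
    have hmem : ∀ m ∈ s, m ∈ F (g m) := by
      intro m hm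
      exact hbm m (by simpa [hs] using (Finset.mem_filter.mp hm).2)
    have hmaps : ∀ m ∈ s, g m ∈ Finset.range (b * N) := by
      intro m hm
      have h2 := ha _ _ (hmem m hm)
      have hm0 : m ≠ 0 := by
        intro h
        rw [h] at h2
        simp at h2
        omega
      have hmN : m < N := Finset.mem_range.mp (Finset.mem_filter.mp hm).1
      have hlen : (Nat.digits b m).length < b * m :=
        calc (Nat.digits b m).length < 2 ^ (Nat.digits b m).length := Nat.lt_two_pow_self
          _ ≤ b ^ (Nat.digits b m).length := Nat.pow_le_pow_left hb _
          _ ≤ b * m := Nat.base_pow_length_digits_le b m hb hm0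
      refine Finset.mem_range.mpr ?_
      have hb0' : 0 < b := by omega
      have : b * m < b * N := (Nat.mul_lt_mul_left hb0').mpr hmN
      omega
    have key : ∀ j, ∀ m ∈ F j, (1:ℝ) / m ≤ (b:ℝ) / (b:ℝ) ^ (L0 + j) := by
      intro j m hm
      have h2 := ha _ _ hm
      have hm0 : m ≠ 0 := by
        intro h
        rw [h] at h2
        simp at h2
        omega
      have hpow : (b:ℝ) ^ (L0 + j) ≤ (b:ℝ) * m := by
        have := Nat.base_pow_length_digits_le b m hb hm0
        rw [h2] at this
        exact_mod_cast this
      have hm0' : (0:ℝ) < m := by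
        have : 0 < m := Nat.pos_of_ne_zero hm0
        exact_mod_cast this
      rw [div_le_div_iff₀ hm0' (by positivity)]
      simpa using hpow

    calc ∑ m ∈ s, (1:ℝ) / m
        = ∑ j ∈ Finset.range (b * N), ∑ m ∈ s.filter (fun m => g m = j), (1:ℝ) / m :=
          (Finset.sum_fiberwise_of_maps_to hmaps _).symm
      _ ≤ ∑ j ∈ Finset.range (b * N), ∑ m ∈ F j, (1:ℝ) / m := by
          refine Finset.sum_le_sum fun j _ => ?_
          refine Finset.sum_le_sum_of_subset_of_nonneg ?_ (fun m _ _ => by positivity)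
          intro m hm
          have h1 := Finset.mem_filter.mp hm
          have := hmem m h1.1
          rwa [h1.2] at this
      _ ≤ ∑ j ∈ Finset.range (b * N), ((b:ℝ) * (((j:ℝ) + 1) * (rr b / b) ^ j)) := by
          refine Finset.sum_le_sum fun j _ => ?_
          have hcard := Finset.sum_le_card_nsmul (F j) _ _ (key j)
          rw [nsmul_eq_mul] at hcard
          refine le_trans hcard ?_
          have hr0 : (0:ℝ) ≤ rr b := by
            have h1 := (rr_facts hb).1
            linarith
          have hbpos : (0:ℝ) < (b:ℝ) ^ (L0 + j) := by positivity
          have step1 : ((F j).card : ℝ) * ((b:ℝ) / (b:ℝ) ^ (L0 + j))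
              ≤ (((j:ℝ) + 1) * rr b ^ j) * ((b:ℝ) / (b:ℝ) ^ (L0 + j)) := by
            exact mul_le_mul_of_nonneg_right (hc j) (by positivity)
          refine le_trans step1 ?_
          have hple : (b:ℝ) / (b:ℝ) ^ (L0 + j) ≤ (b:ℝ) / (b:ℝ) ^ (1 + j) := by
            refine div_le_div_of_nonneg_left (by positivity) (by positivity) ?_
            exact pow_le_pow_right₀ (by exact_mod_cast (by omega : 1 ≤ b)) (by omega)
          have h2 : (((j:ℝ) + 1) * rr b ^ j) * ((b:ℝ) / (b:ℝ) ^ (L0 + j))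
              ≤ (((j:ℝ) + 1) * rr b ^ j) * ((b:ℝ) / (b:ℝ) ^ (1 + j)) :=
            mul_le_mul_of_nonneg_left hple (by positivity)
          have h3 : (((j:ℝ) + 1) * rr b ^ j) * ((b:ℝ) / (b:ℝ) ^ (1 + j))
              = ((j:ℝ) + 1) * (rr b / b) ^ j := by
            rw [div_pow, pow_add, pow_one]
            field_simp
          rw [h3] at h2
          refine le_trans h2 ?_
          refine le_mul_of_one_le_left (hnonneg j) ?_
          exact_mod_cast (by omega : 1 ≤ b)
      _ = (b:ℝ) * ∑ j ∈ Finset.range (b * N), (((j:ℝ) + 1) * (rr b / b) ^ j) := by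
          rw [Finset.mul_sum]
      _ ≤ (b:ℝ) * ∑' j : ℕ, ((j:ℝ) + 1) * (rr b / b) ^ j := by
          refine mul_le_mul_of_nonneg_left ?_ (le_of_lt hb0)
          exact hsum.sum_le_tsum _ (fun j _ => hnonneg j)

lemma summable_V : Summable (Set.indicator {m : ℕ | KeptV b α n m} (fun m => (1:ℝ) / m)) := by
  have hL0 : 1 ≤ (Nat.digits b n).length := by
    have : Nat.digits b n ≠ [] := Nat.digits_ne_nil_iff_ne_zero.mpr (by omega)
    exact List.length_pos_iff.mpr this
  refine summable_aux hb hL0 (F := fun j => clsV b α n j) ?_ ?_ ?_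
  · intro j m hm
    exact ((mem_clsV (α := α) hb).mp hm).2
  · intro m hm
    obtain ⟨t, ht, -, -⟩ := id hm
    have := trailing_length hb ht
    refine (mem_clsV (α := α) hb).mpr ⟨hm, by omega⟩
  · intro j
    have h1 := (card_bound α hb hα hn j n hn).2
    have hr0 : (0:ℝ) ≤ rr b ^ j := by
      have := (rr_facts (b := b) hb).1
      positivity
    nlinarith

lemma summable_U : Summable (Set.indicator {m : ℕ | KeptU b α n m} (fun m => (1:ℝ) / m)) := by
  have hL0 : 1 ≤ (Nat.digits b n).length := by
    have : Nat.digits b n ≠ [] := Nat.digits_ne_nil_iff_ne_zero.mpr (by omega)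
    exact List.length_pos_iff.mpr this
  refine summable_aux hb hL0 (F := fun j => clsU b α n j) ?_ ?_ ?_
  · intro j m hm
    exact ((mem_clsU (α := α) hb).mp hm).2
  · intro m hm
    obtain ⟨t, ht, -, -⟩ := id hm
    have := trailing_length hb ht
    refine (mem_clsU (α := α) hb).mpr ⟨hm, by omega⟩
  · intro j
    have h1 := (card_bound α hb hα hn j n hn).1
    have hr0 : (0:ℝ) ≤ rr b ^ j := by
      have := (rr_facts (b := b) hb).1
      positivity
    nlinarith

lemma pointwise (m : ℕ) :
    Set.indicator {m : ℕ | KeptV b α n m} (fun m => (1:ℝ) / m) m =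
      ∑ d ∈ (Finset.range b).erase α,
        (Set.indicator {m : ℕ | KeptV b α (n * b + d) m} (fun m => (1:ℝ) / m) m +
         Set.indicator {m : ℕ | KeptV b α (n * b ^ 2 + d * b + α) m} (fun m => (1:ℝ) / m) m +
         Set.indicator {m : ℕ | KeptU b α (n * b ^ 3 + d * b ^ 2 + α * b + α) m}
           (fun m => (1:ℝ) / m) m) := by
  have IM : ∀ S : Set ℕ, m ∈ S → S.indicator (fun m => (1:ℝ) / m) m = 1 / m :=
    fun S h => Set.indicator_of_mem h _
  have IN : ∀ S : Set ℕ, m ∉ S → S.indicator (fun m => (1:ℝ) / m) m = 0 :=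
    fun S h => Set.indicator_of_notMem h _
  by_cases hm : KeptV b α n m
  · obtain ⟨d₀, hdb₀, hdα₀, hcase⟩ := (keptV_struct (α := α) hb hα hn).mp hm
    rw [IM {m : ℕ | KeptV b α n m} hm]
    rw [Finset.sum_eq_single_of_mem d₀
      (Finset.mem_erase.mpr ⟨hdα₀, Finset.mem_range.mpr hdb₀⟩)]
    · rcases hcase with h | h | h
      · rw [IM {m : ℕ | KeptV b α (n * b + d₀) m} h,
          IN {m : ℕ | KeptV b α (n * b ^ 2 + d₀ * b + α) m}
            (fun h' => disj12 α hb hα hn hdb₀ hdb₀ h h'),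
          IN {m : ℕ | KeptU b α (n * b ^ 3 + d₀ * b ^ 2 + α * b + α) m}
            (fun h' => disj13 α hb hα hn hdb₀ hdb₀ h h')]
        ring
      · rw [IM {m : ℕ | KeptV b α (n * b ^ 2 + d₀ * b + α) m} h,
          IN {m : ℕ | KeptV b α (n * b + d₀) m}
            (fun h' => disj12 α hb hα hn hdb₀ hdb₀ h' h),
          IN {m : ℕ | KeptU b α (n * b ^ 3 + d₀ * b ^ 2 + α * b + α) m}
            (fun h' => disj23 α hb hα hn hdb₀ hdb₀ h h')]
        ring
      · rw [IM {m : ℕ | KeptU b α (n * b ^ 3 + d₀ * b ^ 2 + α * b + α) m} h,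
          IN {m : ℕ | KeptV b α (n * b + d₀) m}
            (fun h' => disj13 α hb hα hn hdb₀ hdb₀ h' h),
          IN {m : ℕ | KeptV b α (n * b ^ 2 + d₀ * b + α) m}
            (fun h' => disj23 α hb hα hn hdb₀ hdb₀ h' h)]
        ring
    · intro d' hd' hne
      have hdb' : d' < b := Finset.mem_range.mp (Finset.mem_erase.mp hd').2
      have z1 : ¬ KeptV b α (n * b + d') m := by
        intro h'
        rcases hcase with h | h | h
        · exact hne (disj11 α hb hα hn hdb' hdb₀ h' h)
        · exact disj12 α hb hα hn hdb' hdb₀ h' h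
        · exact disj13 α hb hα hn hdb' hdb₀ h' h
      have z2 : ¬ KeptV b α (n * b ^ 2 + d' * b + α) m := by
        intro h'
        rcases hcase with h | h | h
        · exact disj12 α hb hα hn hdb₀ hdb' h h'
        · exact hne (disj22 α hb hα hn hdb' hdb₀ h' h)
        · exact disj23 α hb hα hn hdb' hdb₀ h' h
      have z3 : ¬ KeptU b α (n * b ^ 3 + d' * b ^ 2 + α * b + α) m := by
        intro h'
        rcases hcase with h | h | h
        · exact disj13 α hb hα hn hdb₀ hdb' h h'
        · exact disj23 α hb hα hn hdb₀ hdb' h h'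
        · exact hne (disj33 α hb hα hn hdb' hdb₀ h' h)
      rw [IN {m : ℕ | KeptV b α (n * b + d') m} z1,
        IN {m : ℕ | KeptV b α (n * b ^ 2 + d' * b + α) m} z2,
        IN {m : ℕ | KeptU b α (n * b ^ 3 + d' * b ^ 2 + α * b + α) m} z3]
      ring
  · rw [IN {m : ℕ | KeptV b α n m} hm]
    refine (Finset.sum_eq_zero fun d hd => ?_).symm
    have hd' := Finset.mem_erase.mp hd
    have hdb : d < b := Finset.mem_range.mp hd'.2
    have z1 : ¬ KeptV b α (n * b + d) m := fun h' =>
      hm ((keptV_struct (α := α) hb hα hn).mpr ⟨d, hdb, hd'.1, Or.inl h'⟩)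
    have z2 : ¬ KeptV b α (n * b ^ 2 + d * b + α) m := fun h' =>
      hm ((keptV_struct (α := α) hb hα hn).mpr ⟨d, hdb, hd'.1, Or.inr (Or.inl h')⟩)
    have z3 : ¬ KeptU b α (n * b ^ 3 + d * b ^ 2 + α * b + α) m := fun h' =>
      hm ((keptV_struct (α := α) hb hα hn).mpr ⟨d, hdb, hd'.1, Or.inr (Or.inr h')⟩)
    rw [IN {m : ℕ | KeptV b α (n * b + d) m} z1,
      IN {m : ℕ | KeptV b α (n * b ^ 2 + d * b + α) m} z2,
      IN {m : ℕ | KeptU b α (n * b ^ 3 + d * b ^ 2 + α * b + α) m} z3]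
    ring

theorem main : V b α n = ∑ d ∈ (Finset.range b).erase α,
    (V b α (n * b + d) + V b α (n * b ^ 2 + d * b + α)
      + U b α (n * b ^ 3 + d * b ^ 2 + α * b + α)) := by
  have hVeq : ∀ k : ℕ, V b α k
      = ∑' m : ℕ, Set.indicator {m : ℕ | KeptV b α k m} (fun m => (1:ℝ) / m) m := by
    intro k
    rw [V, ← tsum_subtype]
    rfl
  have hUeq : ∀ k : ℕ, U b α k
      = ∑' m : ℕ, Set.indicator {m : ℕ | KeptU b α k m} (fun m => (1:ℝ) / m) m := by
    intro k
    rw [U, ← tsum_subtype]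
    rfl
  have sumV : ∀ k : ℕ, 0 < k →
      Summable (Set.indicator {m : ℕ | KeptV b α k m} (fun m => (1:ℝ) / m)) :=
    fun k hk => summable_V α hb hα hk
  have sumU : ∀ k : ℕ, 0 < k →
      Summable (Set.indicator {m : ℕ | KeptU b α k m} (fun m => (1:ℝ) / m)) :=
    fun k hk => summable_U α hb hα hk
  rw [hVeq n]
  have step1 : ∑' m : ℕ, Set.indicator {m : ℕ | KeptV b α n m} (fun m => (1:ℝ) / m) m
      = ∑' m : ℕ, ∑ d ∈ (Finset.range b).erase α,
        (Set.indicator {m : ℕ | KeptV b α (n * b + d) m} (fun m => (1:ℝ) / m) m +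
         Set.indicator {m : ℕ | KeptV b α (n * b ^ 2 + d * b + α) m} (fun m => (1:ℝ) / m) m +
         Set.indicator {m : ℕ | KeptU b α (n * b ^ 3 + d * b ^ 2 + α * b + α) m}
           (fun m => (1:ℝ) / m) m) := by
    exact tsum_congr (pointwise (α := α) hb hα hn)
  rw [step1]
  have hpos : ∀ d, d < b → 0 < n * b + d ∧ 0 < n * b ^ 2 + d * b + α ∧
      0 < n * b ^ 3 + d * b ^ 2 + α * b + α := by
    intro d hd
    refine ⟨by positivity, by positivity, by positivity⟩
  rw [Summable.tsum_finsetSum (fun d hd => ?_)]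
  · refine Finset.sum_congr rfl fun d hd => ?_
    have hdb : d < b := Finset.mem_range.mp (Finset.mem_erase.mp hd).2
    obtain ⟨p1, p2, p3⟩ := hpos d hdb
    rw [hVeq (n * b + d), hVeq (n * b ^ 2 + d * b + α),
      hUeq (n * b ^ 3 + d * b ^ 2 + α * b + α)]
    rw [Summable.tsum_add ((sumV _ p1).add (sumV _ p2)) (sumU _ p3),
      Summable.tsum_add (sumV _ p1) (sumV _ p2)]
  · have hdb : d < b := Finset.mem_range.mp (Finset.mem_erase.mp hd).2
    obtain ⟨p1, p2, p3⟩ := hpos d hdb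
    exact ((sumV _ p1).add (sumV _ p2)).add (sumU _ p3)

end Scratch

theorem stmt_16 (b : ℕ) (hb : 2 ≤ b) (α : ℕ) (hα : α < b) (n : ℕ) (hn : 0 < n) :
    V b α n = ∑ d ∈ (Finset.range b).erase α,
      (V b α (n * b + d) + V b α (n * b ^ 2 + d * b + α)
        + U b α (n * b ^ 3 + d * b ^ 2 + α * b + α)) := by
  exact Scratch.main α hb hα hn
end
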